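/- With P, G, X, 𝒢 as above, define Q_x := {g ∈ G : (x,g) ∈ 𝒢} for x ∈ X. Then Q_x is a closed subset of G satisfying Q_x · P ⊆ Q_x; hence the interior of Q_x is dense in Q_x and its boundary has Haar measure zero. -/

import Mathlib

/-!
The Ore condition turns `(a b⁻¹) p` into `a' d⁻¹` with `a', d ∈ P`, which gives `Q_x P ⊆ Q_x`.
Injectivity of the action shows that if `g ∈ Q_x` and `g b ∈ P`, then `x (g b)` lies in the compact
set `X b`; as every `g` admits such a `b` with `g b ∈ Int P`, the set `Q_x` is locally the preimage
of a closed set under a continuous map, hence closed. Right translation by `v ∈ Int P` maps `Q_x`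
into its interior, so the boundary is disjoint from its translates by such `v`, which come
arbitrarily close to `1`; outer regularity of Haar measure, together with the modular character
(`Δ v` or `Δ v⁻¹` is at least `1`), then forces the boundary to be null.
-/

open Pointwise MeasureTheory Topology

section HaarMeasure

variable {G : Type*} [Group G] [TopologicalSpace G] [IsTopologicalGroup G] [LocallyCompactSpace G]
  [MeasurableSpace G] [BorelSpace G] (μ : Measure G) [μ.IsHaarMeasure]

theorem measure_preimage_mul_right [μ.InnerRegular] (g : G) {S : Set G} (hS : MeasurableSet S) :
    μ ((· * g) ⁻¹' S) = Measure.modularCharacter g * μ S := by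
  rw [← Measure.map_apply (measurable_mul_const g) hS,
    Measure.map_right_mul_eq_modularCharacterFun_smul]
  rfl

theorem le_measure_preimage_mul_right_or [μ.InnerRegular] (g : G) {S : Set G}
    (hS : MeasurableSet S) : μ S ≤ μ ((· * g) ⁻¹' S) ∨ μ S ≤ μ ((· * g⁻¹) ⁻¹' S) := by
  rw [measure_preimage_mul_right μ g hS, measure_preimage_mul_right μ g⁻¹ hS]
  have hΔ : Measure.modularCharacter g * Measure.modularCharacter g⁻¹ = 1 := by
    rw [← map_mul, mul_inv_cancel, map_one]
  rcases le_total 1 (Measure.modularCharacter g) with h | h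
  · left
    exact le_mul_of_one_le_left' (by exact_mod_cast h)
  · right
    refine le_mul_of_one_le_left' ?_
    have : (1 : NNReal) ≤ Measure.modularCharacter g⁻¹ := hΔ ▸ mul_le_of_le_one_left' h
    exact_mod_cast this

theorem measure_eq_zero_of_forall_nhds_disjoint_preimage_mul_right [T2Space G]
    [SecondCountableTopology G] {F : Set G} (hF : MeasurableSet F)
    (h : ∀ V ∈ 𝓝 (1 : G), ∃ v ∈ V, Disjoint F ((· * v) ⁻¹' F)) : μ F = 0 := by
  by_contra hne
  obtain ⟨K, hKF, hK, hK0⟩ := hF.exists_lt_isCompact (pos_iff_ne_zero.2 hne)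
  obtain ⟨O, hKO, hO, hOK⟩ :=
    hK.exists_isOpen_lt_of_lt (μ K + μ K) (ENNReal.lt_add_right hK.measure_lt_top.ne hK0.ne')
  obtain ⟨V, hV, hKV⟩ := compact_open_separated_mul_right hK hO hKO
  obtain ⟨v, ⟨hvV, hvV'⟩, hv⟩ := h (V ∩ V⁻¹) (Filter.inter_mem hV (inv_mem_nhds_one G hV))
  -- `μ O < 2 μ K` leaves no room in `O` for a translate of `K` disjoint from `K` and as large.
  have key : ∀ w, w⁻¹ ∈ V → Disjoint K ((· * w) ⁻¹' K) → ¬ μ K ≤ μ ((· * w) ⁻¹' K) := by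
    intro w hw hdisj hle
    have hsub : K ∪ (· * w) ⁻¹' K ⊆ O := Set.union_subset hKO fun g hg =>
      hKV ⟨g * w, hg, w⁻¹, hw, mul_inv_cancel_right g w⟩
    have := calc μ K + μ K ≤ μ K + μ ((· * w) ⁻¹' K) := by gcongr
      _ = μ (K ∪ (· * w) ⁻¹' K) :=
        (measure_union hdisj (hK.measurableSet.preimage (measurable_mul_const w))).symm
      _ ≤ μ O := measure_mono hsub
    exact this.not_gt hOK
  rcases le_measure_preimage_mul_right_or μ v hK.measurableSet with hle | hle
  · exact key v hvV' (hv.mono hKF (Set.preimage_mono hKF)) hle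
  · refine key v⁻¹ (by rwa [inv_inv]) ?_ hle
    refine Set.disjoint_left.2 fun g hg hgv => Set.disjoint_left.1 hv (hKF hgv) ?_
    simpa using hKF hg

end HaarMeasure

section SemigroupTranslates

variable {G : Type*} [Group G] [TopologicalSpace G] [IsTopologicalGroup G] {P Q : Set G}

theorem mul_interior_subset_interior_of_mul_subset (hQP : Q * P ⊆ Q) :
    Q * interior P ⊆ interior Q :=
  interior_maximal ((Set.mul_subset_mul_left interior_subset).trans hQP) isOpen_interior.mul_left

theorem subset_closure_interior_of_mul_subset (hQP : Q * P ⊆ Q)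
    (hP : (1 : G) ∈ closure (interior P)) : Q ⊆ closure (interior Q) := fun g hg => by
  simpa using map_mem_closure (continuous_const_mul g) hP fun w hw =>
    mul_interior_subset_interior_of_mul_subset hQP (Set.mul_mem_mul hg hw)

theorem measure_frontier_eq_zero_of_mul_subset [LocallyCompactSpace G] [T2Space G]
    [SecondCountableTopology G] [MeasurableSpace G] [BorelSpace G] (μ : Measure G)
    [μ.IsHaarMeasure] (hQ : IsClosed Q) (hQP : Q * P ⊆ Q) (hP : (1 : G) ∈ closure (interior P)) :
    μ (frontier Q) = 0 := by
  refine measure_eq_zero_of_forall_nhds_disjoint_preimage_mul_right μ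
    isClosed_frontier.measurableSet fun V hV => ?_
  obtain ⟨v, hvV, hvP⟩ := mem_closure_iff_nhds.1 hP V hV
  refine ⟨v, hvV, Set.disjoint_left.2 fun g hg hgv => ?_⟩
  rw [Set.mem_preimage, hQ.frontier_eq] at hgv
  rw [hQ.frontier_eq] at hg
  exact hgv.2 (mul_interior_subset_interior_of_mul_subset hQP (Set.mul_mem_mul hg.1 hvP))

end SemigroupTranslates

theorem exists_eq_mul_inv_of_mul_inv_eq_univ {G : Type*} [Group G] {P : Set G}
    (hOre : P * P⁻¹ = Set.univ) (g : G) : ∃ a ∈ P, ∃ b ∈ P, g = a * b⁻¹ := by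
  obtain ⟨a, ha, b, hb, hab⟩ := Set.mem_mul.1 (hOre ▸ Set.mem_univ g)
  exact ⟨a, ha, b⁻¹, hb, by rw [inv_inv, hab]⟩

theorem exists_mul_mem_interior {G : Type*} [Group G] [TopologicalSpace G] [IsTopologicalGroup G]
    {P : Set G} (hP_mul : P * P ⊆ P) (hOre : P * P⁻¹ = Set.univ) (hP : (interior P).Nonempty)
    (g : G) : ∃ b ∈ P, g * b ∈ interior P := by
  obtain ⟨u, hu⟩ := hP
  obtain ⟨a, ha, b, hb, rfl⟩ := exists_eq_mul_inv_of_mul_inv_eq_univ hOre g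
  refine ⟨b * u, hP_mul (Set.mul_mem_mul hb (interior_subset hu)), ?_⟩
  rw [mul_assoc, inv_mul_cancel_left]
  exact mul_interior_subset_interior_of_mul_subset hP_mul (Set.mul_mem_mul ha hu)

section GroupoidFiber

variable {G : Type*} [Group G] {P : Set G} {X : Type*} {act : X → G → X} {x : X}

/-- The fibre `Q_x` over `x` of the groupoid `𝒢`. -/
def groupoidFiber (P : Set G) (act : X → G → X) (x : X) : Set G :=
  {g | ∃ a ∈ P, ∃ b ∈ P, ∃ y : X, g = a * b⁻¹ ∧ act x a = act y b}

theorem mem_groupoidFiber_of_act_eq {g b : G} {y : X} (hb : b ∈ P) (hgb : g * b ∈ P)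
    (h : act x (g * b) = act y b) : g ∈ groupoidFiber P act x :=
  ⟨g * b, hgb, b, hb, y, (mul_inv_cancel_right g b).symm, h⟩

theorem groupoidFiber_mul_subset (hP_mul : P * P ⊆ P) (hOre : P * P⁻¹ = Set.univ)
    (hact_mul : ∀ x, ∀ a ∈ P, ∀ b ∈ P, act (act x a) b = act x (a * b)) :
    groupoidFiber P act x * P ⊆ groupoidFiber P act x := by
  rintro _ ⟨_, ⟨a, ha, b, hb, y, rfl, hxy⟩, p, hp, rfl⟩
  obtain ⟨c, hc, d, hd, hcd⟩ := exists_eq_mul_inv_of_mul_inv_eq_univ hOre (b⁻¹ * p)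
  have hbc : b * c = p * d :=
    calc b * c = b * (c * d⁻¹) * d := by group
      _ = p * d := by rw [← hcd]; group
  refine ⟨a * c, hP_mul (Set.mul_mem_mul ha hc), d, hd, act y p, ?_, ?_⟩
  · change a * b⁻¹ * p = a * c * d⁻¹
    rw [mul_assoc a, hcd, mul_assoc]
  · rw [← hact_mul x a ha c hc, hxy, hact_mul y b hb c hc, hbc, hact_mul y p hp d hd]

theorem exists_act_eq_of_mem_groupoidFiber (hOre : P * P⁻¹ = Set.univ)
    (hact_mul : ∀ x, ∀ a ∈ P, ∀ b ∈ P, act (act x a) b = act x (a * b))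
    (hact_inj : ∀ a ∈ P, Function.Injective (fun x => act x a))
    {g b : G} (hg : g ∈ groupoidFiber P act x) (hb : b ∈ P) (hgb : g * b ∈ P) :
    ∃ y, act x (g * b) = act y b := by
  obtain ⟨a, ha, b₀, hb₀, y, rfl, hxy⟩ := hg
  obtain ⟨e, he, c, hc, hec⟩ := exists_eq_mul_inv_of_mul_inv_eq_univ hOre (b⁻¹ * b₀)
  have hb₀c : b₀ * c = b * e :=
    calc b₀ * c = b * (b⁻¹ * b₀) * c := by group
      _ = b * e := by rw [hec]; group
  refine ⟨y, hact_inj e he ?_⟩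
  calc act (act x (a * b₀⁻¹ * b)) e = act x (a * b₀⁻¹ * (b * e)) := by
        rw [hact_mul _ _ hgb e he, mul_assoc]
    _ = act (act x a) c := by rw [← hb₀c, hact_mul x a ha c hc, mul_assoc, inv_mul_cancel_left]
    _ = act (act y b) e := by rw [hxy, hact_mul y b₀ hb₀ c hc, hb₀c, hact_mul y b hb e he]

theorem isClosed_groupoidFiber [TopologicalSpace G] [IsTopologicalGroup G] [TopologicalSpace X]
    [CompactSpace X] [T2Space X] (hP_mul : P * P ⊆ P) (hOre : P * P⁻¹ = Set.univ) (hP : (interior P).Nonempty)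
    (hact_cont : ContinuousOn (fun p : X × G => act p.1 p.2) (Set.univ ×ˢ P))
    (hact_mul : ∀ x, ∀ a ∈ P, ∀ b ∈ P, act (act x a) b = act x (a * b))
    (hact_inj : ∀ a ∈ P, Function.Injective (fun x => act x a)) (x : X) :
    IsClosed (groupoidFiber P act x) := by
  refine isClosed_of_closure_subset fun g hg => ?_
  obtain ⟨b, hb, hgb⟩ := exists_mul_mem_interior hP_mul hOre hP g
  -- Near `g`, `Q_x` is where `act x (· * b)` lands in the compact set `range (act · b)`.
  set U := (· * b) ⁻¹' interior P
  have hU : IsOpen U := isOpen_interior.preimage (continuous_mul_const b)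
  have hC : IsClosed (Set.range fun y => act y b) :=
    (isCompact_range (hact_cont.comp_continuous (continuous_id.prodMk continuous_const)
      fun _ => ⟨trivial, hb⟩)).isClosed
  have hf : ContinuousOn (fun h => act x (h * b)) U :=
    hact_cont.comp (continuous_const.prodMk (continuous_mul_const b)).continuousOn
      fun h hh => ⟨trivial, interior_subset hh⟩
  obtain ⟨u, hu, hUu⟩ := continuousOn_iff_isClosed.1 hf _ hC
  have hQU : U ∩ groupoidFiber P act x ⊆ u := fun h ⟨hhU, hhQ⟩ => by
    obtain ⟨y, hy⟩ := exists_act_eq_of_mem_groupoidFiber hOre hact_mul hact_inj hhQ hb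
      (interior_subset hhU)
    have : h ∈ u ∩ U := hUu ▸ ⟨⟨y, hy.symm⟩, hhU⟩
    exact this.1
  have hgu : g ∈ u ∩ U := ⟨closure_minimal hQU hu (hU.inter_closure ⟨hgb, hg⟩), hgb⟩
  obtain ⟨⟨y, hy⟩, -⟩ := hUu ▸ hgu
  exact mem_groupoidFiber_of_act_eq hb (interior_subset hgb) hy.symm

end GroupoidFiber

theorem stmt12_general {G : Type*} [Group G] [TopologicalSpace G] [IsTopologicalGroup G]
    [LocallyCompactSpace G] [T2Space G] [SecondCountableTopology G]
    [MeasurableSpace G] [BorelSpace G]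
    (μ : Measure G) [μ.IsHaarMeasure]
    (P : Set G) (hP_one : (1 : G) ∈ P)
    (hP_mul : ∀ a ∈ P, ∀ b ∈ P, a * b ∈ P)
    (hOre : P * P⁻¹ = Set.univ)
    (hP_dense : P ⊆ closure (interior P))
    {X : Type*} [TopologicalSpace X] [CompactSpace X] [T2Space X]
    (act : X → G → X)
    (hact_cont : ContinuousOn (fun p : X × G => act p.1 p.2) (Set.univ ×ˢ P))
    (hact_mul : ∀ x, ∀ a ∈ P, ∀ b ∈ P, act (act x a) b = act x (a * b))
    (hact_inj : ∀ a ∈ P, Function.Injective (fun x => act x a))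
    (𝒢 : Set (X × G))
    (h𝒢 : 𝒢 = {p : X × G | ∃ a ∈ P, ∃ b ∈ P, ∃ y : X,
        p.2 = a * b⁻¹ ∧ act p.1 a = act y b})
    (x : X) (Q : Set G) (hQ : Q = {g : G | (x, g) ∈ 𝒢}) :
    IsClosed Q ∧ Q * P ⊆ Q ∧ Q ⊆ closure (interior Q) ∧ μ (frontier Q) = 0 := by
  have hPP : P * P ⊆ P := Set.mul_subset_iff.2 hP_mul
  have h1 : (1 : G) ∈ closure (interior P) := hP_dense hP_one
  have hQ_eq : Q = groupoidFiber P act x := by subst hQ h𝒢; rfl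
  have hQP : Q * P ⊆ Q := hQ_eq ▸ groupoidFiber_mul_subset hPP hOre hact_mul
  have hQ_closed : IsClosed Q := hQ_eq ▸ isClosed_groupoidFiber hPP hOre
    (closure_nonempty_iff.1 ⟨1, h1⟩) hact_cont hact_mul hact_inj x
  exact ⟨hQ_closed, hQP, subset_closure_interior_of_mul_subset hQP h1,
    measure_frontier_eq_zero_of_mul_subset μ hQ_closed hQP h1⟩

/-- For `x ∈ X`, the set `Q_x = {g : (x,g) ∈ 𝒢}` is closed, satisfies `Q_x P ⊆ Q_x`; hence
its interior is dense in it and its boundary has Haar measure zero. -/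
theorem stmt12 {G : Type*} [Group G] [TopologicalSpace G] [IsTopologicalGroup G]
    [LocallyCompactSpace G] [T2Space G] [SecondCountableTopology G]
    [MeasurableSpace G] [BorelSpace G]
    (μ : Measure G) [μ.IsHaarMeasure]
    (P : Set G) (hP_closed : IsClosed P) (hP_one : (1 : G) ∈ P)
    (hP_mul : ∀ a ∈ P, ∀ b ∈ P, a * b ∈ P)
    (hOre : P * P⁻¹ = Set.univ)
    (hP_dense : P ⊆ closure (interior P))
    {X : Type*} [TopologicalSpace X] [CompactSpace X] [T2Space X]
    (act : X → G → X)
    (hact_cont : ContinuousOn (fun p : X × G => act p.1 p.2) (Set.univ ×ˢ P))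
    (hact_one : ∀ x, act x 1 = x)
    (hact_mul : ∀ x, ∀ a ∈ P, ∀ b ∈ P, act (act x a) b = act x (a * b))
    (hact_inj : ∀ a ∈ P, Function.Injective (fun x => act x a))
    (𝒢 : Set (X × G))
    (h𝒢 : 𝒢 = {p : X × G | ∃ a ∈ P, ∃ b ∈ P, ∃ y : X,
        p.2 = a * b⁻¹ ∧ act p.1 a = act y b})
    (x : X) (Q : Set G) (hQ : Q = {g : G | (x, g) ∈ 𝒢}) :
    IsClosed Q ∧ Q * P ⊆ Q ∧ Q ⊆ closure (interior Q) ∧ μ (frontier Q) = 0 :=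
  stmt12_general μ P hP_one hP_mul hOre hP_dense act hact_cont hact_mul hact_inj 𝒢 h𝒢 x Q hQ
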